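/- Let r : ℝ → ℂ be continuous with 1 + s|r(s)|² > 0 for all s ≤ μ and s ↦ log(1 + s|r(s)|²) integrable on (−∞, μ]. Define δ(λ) = exp[ (−i/(2π)) ∫_{−∞}^{μ} log(1 + s|r(s)|²)/(s − λ) ds ] for λ ∈ ℂ \ (−∞, μ]. Then δ is analytic and nonvanishing on ℂ \ (−∞, μ], and δ satisfies the symmetry δ(λ) = conj(δ(conj λ))⁻¹. -/

import Mathlib

/-!
The exponent of `δ` is `-i/(2π)` times the Cauchy transform `λ ↦ ∫ f(s)/(s - λ) ds` of the
integrable density `f(s) = log(1 + s|r(s)|²)` carried by the cut. Near a point at distance `> ε`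
from the cut, the `λ`-derivative of the integrand is dominated by `|f(s)|/ε²`, so the transform
is holomorphic off the cut, and hence so is its exponential, which never vanishes. Since `f` is
real, conjugating the transform at `conj λ` gives back the transform at `λ`, while the prefactor
`-i/(2π)` changes sign; so `conj (δ (conj λ)) = 1/δ(λ)`.
-/

open Complex ComplexConjugate MeasureTheory

noncomputable def cauchyTransform (ν : Measure ℝ) (f : ℝ → ℂ) (z : ℂ) : ℂ :=
  ∫ s, f s / ((s : ℂ) - z) ∂ν

lemma exists_norm_sub_ge_of_notMem_closed {K : Set ℂ} (hK : IsClosed K) {z : ℂ} (hz : z ∉ K) :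
    ∃ ε > 0, ∀ k ∈ K, ∀ w ∈ Metric.ball z ε, ε ≤ ‖k - w‖ := by
  obtain ⟨ε, hε, hball⟩ := Metric.isOpen_iff.mp hK.isOpen_compl z hz
  refine ⟨ε / 2, half_pos hε, fun k hk w hw => ?_⟩
  have hkz : ε ≤ dist k z := by
    by_contra! h
    exact hball (Metric.mem_ball.mpr h) hk
  have hwz : dist w z < ε / 2 := hw
  calc ε / 2 ≤ dist k z - dist w z := by linarith
    _ ≤ dist k w := by linarith [dist_triangle k w z]
    _ = ‖k - w‖ := dist_eq_norm k w

theorem differentiableAt_cauchyTransform {ν : Measure ℝ} {f : ℝ → ℂ} (hf : Integrable f ν)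
    {K : Set ℂ} (hK : IsClosed K) (hfK : ∀ᵐ s : ℝ ∂ν, (s : ℂ) ∈ K) {z : ℂ} (hz : z ∉ K) :
    DifferentiableAt ℂ (cauchyTransform ν f) z := by
  obtain ⟨ε, hε, hsep⟩ := exists_norm_sub_ge_of_notMem_closed hK hz
  have hsep_ae : ∀ᵐ s : ℝ ∂ν, ∀ w ∈ Metric.ball z ε, ε ≤ ‖(s : ℂ) - w‖ := by
    filter_upwards [hfK] with s hs using hsep _ hs
  have hmeas : ∀ (w : ℂ) (n : ℕ),
      AEStronglyMeasurable (fun s : ℝ => f s / ((s : ℂ) - w) ^ n) ν :=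
    fun w n => (hf.aemeasurable.div
      ((measurable_ofReal.sub_const w).pow_const n).aemeasurable).aestronglyMeasurable
  have hasDeriv := hasDerivAt_integral_of_dominated_loc_of_deriv_le
    (F := fun w s => f s / ((s : ℂ) - w)) (F' := fun w s => f s / ((s : ℂ) - w) ^ 2)
    (bound := fun s => ‖f s‖ / ε ^ 2) (Metric.ball_mem_nhds z hε)
    (Filter.Eventually.of_forall fun w => by simpa using hmeas w 1) ?_
    (hmeas z 2) ?_ (hf.norm.div_const _) ?_
  · exact hasDeriv.2.differentiableAt
  · refine (hf.norm.div_const ε).mono' (by simpa using hmeas z 1) ?_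
    filter_upwards [hsep_ae] with s hs
    rw [norm_div]
    gcongr
    exact hs z (Metric.mem_ball_self hε)
  · filter_upwards [hsep_ae] with s hs w hw
    rw [norm_div, norm_pow]
    gcongr
    exact hs w hw
  · filter_upwards [hsep_ae] with s hs w hw
    have hne : (s : ℂ) - w ≠ 0 := norm_pos_iff.mp (hε.trans_le (hs w hw))
    have := (((hasDerivAt_id w).const_sub (s : ℂ)).inv hne).const_mul (f s)
    simpa [div_eq_mul_inv] using this

theorem conj_cauchyTransform_conj (ν : Measure ℝ) (f : ℝ → ℂ) (z : ℂ) :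
    conj (cauchyTransform ν f (conj z)) = cauchyTransform ν (fun s => conj (f s)) z := by
  simp only [cauchyTransform, ← integral_conj, map_div₀, map_sub, conj_ofReal, conj_conj]

theorem delta_analytic_nonvanishing_symmetry_general (μ : ℝ) (r : ℝ → ℂ)
    (hint : IntegrableOn (fun s : ℝ => Real.log (1 + s * ‖r s‖^2))
      (Set.Iic μ))
    (cut : Set ℂ) (hcutdef : cut = {z : ℂ | z.im = 0 ∧ z.re ≤ μ})
    (δ : ℂ → ℂ)
    (hδ : ∀ lam : ℂ, δ lam = Complex.exp ((-Complex.I / (2 * Real.pi)) *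
      ∫ s in Set.Iic μ,
        ((Real.log (1 + s * ‖r s‖^2) : ℂ) / ((s : ℂ) - lam)))) :
    DifferentiableOn ℂ δ cutᶜ ∧
    (∀ lam : ℂ, lam ∉ cut → δ lam ≠ 0) ∧
    (∀ lam : ℂ, lam ∉ cut →
      δ lam = ((starRingEnd ℂ) (δ ((starRingEnd ℂ) lam)))⁻¹) := by
  obtain rfl : δ = fun lam => exp ((-I / (2 * Real.pi)) * cauchyTransform
      (volume.restrict (Set.Iic μ)) (fun s => (Real.log (1 + s * ‖r s‖ ^ 2) : ℂ)) lam) :=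
    funext hδ
  have hcut_closed : IsClosed cut := hcutdef ▸
    (isClosed_eq continuous_im continuous_const).inter (isClosed_le continuous_re continuous_const)
  have hcut_mem : ∀ᵐ s : ℝ ∂(volume.restrict (Set.Iic μ)), (s : ℂ) ∈ cut := by
    filter_upwards [ae_restrict_mem measurableSet_Iic] with s hs
    simpa [hcutdef] using hs
  refine ⟨fun z hz => ?_, fun _ _ => exp_ne_zero _, fun z _ => ?_⟩
  · exact (((differentiableAt_cauchyTransform hint.ofReal hcut_closed hcut_mem hz).const_mul
      _).cexp).differentiableWithinAt
  · rw [← exp_conj, ← exp_neg, map_mul, conj_cauchyTransform_conj]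
    simp only [conj_ofReal, map_div₀, map_neg, conj_I, map_mul, map_ofNat]
    congr 1
    ring

/-- The function
`δ(λ) = exp[(−i/(2π)) ∫_{−∞}^{μ} log(1 + s|r(s)|²)/(s − λ) ds]`
is analytic and nonvanishing on `ℂ \ (−∞, μ]`, and satisfies the symmetry
`δ(λ) = conj(δ(conj λ))⁻¹`. -/
theorem delta_analytic_nonvanishing_symmetry (μ : ℝ) (r : ℝ → ℂ)
    (hr : Continuous r)
    (hpos : ∀ s : ℝ, s ≤ μ → 0 < 1 + s * ‖r s‖^2)
    (hint : IntegrableOn (fun s : ℝ => Real.log (1 + s * ‖r s‖^2))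
      (Set.Iic μ))
    (cut : Set ℂ) (hcutdef : cut = {z : ℂ | z.im = 0 ∧ z.re ≤ μ})
    (δ : ℂ → ℂ)
    (hδ : ∀ lam : ℂ, δ lam = Complex.exp ((-Complex.I / (2 * Real.pi)) *
      ∫ s in Set.Iic μ,
        ((Real.log (1 + s * ‖r s‖^2) : ℂ) / ((s : ℂ) - lam)))) :
    DifferentiableOn ℂ δ cutᶜ ∧
    (∀ lam : ℂ, lam ∉ cut → δ lam ≠ 0) ∧
    (∀ lam : ℂ, lam ∉ cut →
      δ lam = ((starRingEnd ℂ) (δ ((starRingEnd ℂ) lam)))⁻¹) :=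
  delta_analytic_nonvanishing_symmetry_general μ r hint cut hcutdef δ hδ
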